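/- Let (π, T) be a contractive covariant representation of (A, α) and let (η, W) on K be its minimal isometric dilation (as constructed via the Schaeffer matrix). If (η', W') on K' is another isometric covariant representation extending (π, T) in the sense that η'(a)|H = π(a), W' is an isometry with P_H W'^n|_H = T^n for all n, η', W' covariant, and K' is the smallest W'-invariant subspace containing H, then there is a unitary Φ : K → K' with Φ|H = id_H, ΦW = W'Φ, and Φη(a) = η'(a)Φ for all a ∈ A. -/

import Mathlib

/-!
Both dilations are spanned by the vectors `W ^ n (e h)`, and their Gram matrix
`⟪W ^ m (e h), W ^ (m + k) (e g)⟫ = ⟪h, T ^ k g⟫` depends only on `T`. Hence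
`W ^ n (e h) ↦ W' ^ n (e' h)` extends to a unitary `K ≃ₗᵢ K'`. It intertwines `W` with `W'`
because both shift `n` to `n + 1`, and `η` with `η'` because covariance gives
`η a (W ^ n (e h)) = W ^ n (e (π (α^[n] a) h))` on both sides.
-/

open ContinuousLinearMap
open scoped InnerProductSpace

namespace Finsupp

theorem inner_linearCombination_eq_of_inner_eq {𝕜 E F ι : Type*} [RCLike 𝕜]
    [NormedAddCommGroup E] [InnerProductSpace 𝕜 E] [NormedAddCommGroup F] [InnerProductSpace 𝕜 F]
    {v : ι → E} {v' : ι → F} (hv : ∀ i j, ⟪v i, v j⟫_𝕜 = ⟪v' i, v' j⟫_𝕜)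
    (c d : ι →₀ 𝕜) :
    ⟪linearCombination 𝕜 v c, linearCombination 𝕜 v d⟫_𝕜 =
      ⟪linearCombination 𝕜 v' c, linearCombination 𝕜 v' d⟫_𝕜 := by
  induction c using induction_linear with
  | zero => simp
  | add c₁ c₂ h₁ h₂ => simp only [map_add, inner_add_left, h₁, h₂]
  | single i a =>
    induction d using induction_linear with
    | zero => simp
    | add d₁ d₂ h₁ h₂ => simp only [map_add, inner_add_right, h₁, h₂]
    | single j b => simp [inner_smul_left, inner_smul_right, hv]

theorem denseRange_linearCombination_iff {R M ι : Type*} [Semiring R]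
    [TopologicalSpace M] [AddCommMonoid M] [Module R M] [ContinuousAdd M] [ContinuousConstSMul R M]
    (v : ι → M) :
    DenseRange (linearCombination R v) ↔
      (Submodule.span R (Set.range v)).topologicalClosure = ⊤ := by
  rw [DenseRange, ← LinearMap.coe_range, range_linearCombination,
    Submodule.dense_iff_topologicalClosure_eq_top]

end Finsupp

theorem exists_linearIsometryEquiv_apply_eq_of_inner_eq {𝕜 E F ι : Type*} [RCLike 𝕜]
    [NormedAddCommGroup E] [InnerProductSpace 𝕜 E] [CompleteSpace E]
    [NormedAddCommGroup F] [InnerProductSpace 𝕜 F] [CompleteSpace F]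
    {v : ι → E} {v' : ι → F} (hv : ∀ i j, ⟪v i, v j⟫_𝕜 = ⟪v' i, v' j⟫_𝕜)
    (hE : (Submodule.span 𝕜 (Set.range v)).topologicalClosure = ⊤)
    (hF : (Submodule.span 𝕜 (Set.range v')).topologicalClosure = ⊤) :
    ∃ Φ : E ≃ₗᵢ[𝕜] F, ∀ i, Φ (v i) = v' i := by
  have hnorm (c : ι →₀ 𝕜) :
      ‖Finsupp.linearCombination 𝕜 v' c‖ = ‖Finsupp.linearCombination 𝕜 v c‖ := by
    rw [@norm_eq_sqrt_re_inner 𝕜, @norm_eq_sqrt_re_inner 𝕜,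
      Finsupp.inner_linearCombination_eq_of_inner_eq hv]
  refine ⟨(LinearEquiv.refl 𝕜 (ι →₀ 𝕜)).extendOfIsometry _ _
    ((Finsupp.denseRange_linearCombination_iff v).2 hE)
    ((Finsupp.denseRange_linearCombination_iff v').2 hF) hnorm, fun i => ?_⟩
  simpa using (LinearEquiv.refl 𝕜 (ι →₀ 𝕜)).extendOfIsometry_eq (Finsupp.linearCombination 𝕜 v)
    (Finsupp.linearCombination 𝕜 v') _ _ hnorm (Finsupp.single i 1)

theorem inner_pow_apply_pow_apply_of_adjoint_comp_self {𝕜 E : Type*} [RCLike 𝕜]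
    [NormedAddCommGroup E] [InnerProductSpace 𝕜 E] [CompleteSpace E]
    {W : E →L[𝕜] E} (hW : adjoint W ∘L W = 1) (n : ℕ) (x y : E) :
    ⟪(W ^ n) x, (W ^ n) y⟫_𝕜 = ⟪x, y⟫_𝕜 := by
  induction n generalizing x y with
  | zero => simp
  | succ n ih =>
    rw [pow_succ, mul_def, comp_apply, comp_apply, ih,
      (inner_map_map_iff_adjoint_comp_self W).2 hW]

theorem inner_pow_apply_pow_add_apply {𝕜 H K : Type*} [RCLike 𝕜]
    [NormedAddCommGroup H] [InnerProductSpace 𝕜 H] [CompleteSpace H]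
    [NormedAddCommGroup K] [InnerProductSpace 𝕜 K] [CompleteSpace K]
    {T : H →L[𝕜] H} {e : H →L[𝕜] K} {W : K →L[𝕜] K} (hW : adjoint W ∘L W = 1)
    (hdil : ∀ n : ℕ, T ^ n = adjoint e ∘L (W ^ n) ∘L e) (m k : ℕ) (h g : H) :
    ⟪(W ^ m) (e h), (W ^ (m + k)) (e g)⟫_𝕜 = ⟪h, (T ^ k) g⟫_𝕜 := by
  rw [pow_add, mul_def, comp_apply, inner_pow_apply_pow_apply_of_adjoint_comp_self hW, hdil,
    comp_apply, comp_apply, adjoint_inner_right]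

theorem inner_pow_apply_pow_apply_eq_of_dilation {𝕜 H K K' : Type*} [RCLike 𝕜]
    [NormedAddCommGroup H] [InnerProductSpace 𝕜 H] [CompleteSpace H]
    [NormedAddCommGroup K] [InnerProductSpace 𝕜 K] [CompleteSpace K]
    [NormedAddCommGroup K'] [InnerProductSpace 𝕜 K'] [CompleteSpace K']
    {T : H →L[𝕜] H} {e : H →L[𝕜] K} {W : K →L[𝕜] K} {e' : H →L[𝕜] K'} {W' : K' →L[𝕜] K'}
    (hW : adjoint W ∘L W = 1) (hdil : ∀ n : ℕ, T ^ n = adjoint e ∘L (W ^ n) ∘L e)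
    (hW' : adjoint W' ∘L W' = 1) (hdil' : ∀ n : ℕ, T ^ n = adjoint e' ∘L (W' ^ n) ∘L e')
    (m n : ℕ) (h g : H) :
    ⟪(W ^ m) (e h), (W ^ n) (e g)⟫_𝕜 = ⟪(W' ^ m) (e' h), (W' ^ n) (e' g)⟫_𝕜 := by
  obtain ⟨k, rfl⟩ | ⟨k, rfl⟩ :=
    le_total m n |>.imp Nat.exists_eq_add_of_le Nat.exists_eq_add_of_le
  · rw [inner_pow_apply_pow_add_apply hW hdil, inner_pow_apply_pow_add_apply hW' hdil']
  · rw [← inner_conj_symm, inner_pow_apply_pow_add_apply hW hdil,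
      ← inner_conj_symm ((W' ^ (n + k)) (e' h)), inner_pow_apply_pow_add_apply hW' hdil']

theorem comp_pow_eq_pow_comp_iterate {R M A : Type*} [Semiring R] [TopologicalSpace M]
    [AddCommMonoid M] [Module R M] {α : A → A} {η : A → M →L[R] M} {W : M →L[R] M}
    (hcov : ∀ a, W ∘L η (α a) = η a ∘L W) (n : ℕ) (a : A) :
    η a ∘L (W ^ n) = (W ^ n) ∘L η (α^[n] a) := by
  induction n generalizing a with
  | zero => ext; simp
  | succ n ih =>
    rw [pow_succ', Function.iterate_succ_apply, mul_def, ← ContinuousLinearMap.comp_assoc, ← hcov,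
      ContinuousLinearMap.comp_assoc, ih, ContinuousLinearMap.comp_assoc]

theorem apply_pow_apply_eq_pow_apply_apply {R H K A : Type*} [Semiring R]
    [TopologicalSpace H] [AddCommMonoid H] [Module R H]
    [TopologicalSpace K] [AddCommMonoid K] [Module R K]
    {α : A → A} {π : A → H →L[R] H} {η : A → K →L[R] K} {e : H →L[R] K} {W : K →L[R] K}
    (hrest : ∀ a, η a ∘L e = e ∘L π a) (hcov : ∀ a, W ∘L η (α a) = η a ∘L W)
    (n : ℕ) (a : A) (h : H) :
    η a ((W ^ n) (e h)) = (W ^ n) (e (π (α^[n] a) h)) := by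
  rw [← comp_apply (η a), comp_pow_eq_pow_comp_iterate hcov, comp_apply,
    ← comp_apply (η _), hrest, comp_apply]

theorem minimal_isometric_dilation_unique
    {A : Type*} [CStarAlgebra A]
    {H : Type*} [NormedAddCommGroup H] [InnerProductSpace ℂ H] [CompleteSpace H]
    {K : Type*} [NormedAddCommGroup K] [InnerProductSpace ℂ K] [CompleteSpace K]
    {K' : Type*} [NormedAddCommGroup K'] [InnerProductSpace ℂ K'] [CompleteSpace K']
    (α : A →⋆ₐ[ℂ] A)
    (π : A →⋆ₐ[ℂ] (H →L[ℂ] H))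
    (T : H →L[ℂ] H)
    -- the first minimal isometric dilation `(η, W)` on `K`:
    (e : H →L[ℂ] K)
    (η : A →⋆ₐ[ℂ] (K →L[ℂ] K)) (W : K →L[ℂ] K)
    (hrest : ∀ a : A, η a ∘L e = e ∘L π a)
    (hWiso : adjoint W ∘L W = 1)
    (hWcov : ∀ a : A, W ∘L η (α a) = η a ∘L W)
    (hdil : ∀ n : ℕ, T ^ n = adjoint e ∘L (W ^ n) ∘L e)
    (hmin : (Submodule.span ℂ {x : K | ∃ (n : ℕ) (h : H), x = (W ^ n) (e h)}).topologicalClosure = ⊤)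
    -- a second minimal isometric dilation `(η', W')` on `K'`:
    (e' : H →L[ℂ] K')
    (η' : A →⋆ₐ[ℂ] (K' →L[ℂ] K')) (W' : K' →L[ℂ] K')
    (hrest' : ∀ a : A, η' a ∘L e' = e' ∘L π a)
    (hWiso' : adjoint W' ∘L W' = 1)
    (hWcov' : ∀ a : A, W' ∘L η' (α a) = η' a ∘L W')
    (hdil' : ∀ n : ℕ, T ^ n = adjoint e' ∘L (W' ^ n) ∘L e')
    (hmin' : (Submodule.span ℂ
      {x : K' | ∃ (n : ℕ) (h : H), x = (W' ^ n) (e' h)}).topologicalClosure = ⊤) :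
    ∃ Φ : K ≃ₗᵢ[ℂ] K',
      (∀ h : H, Φ (e h) = e' h) ∧
      (∀ x : K, Φ (W x) = W' (Φ x)) ∧
      ∀ (a : A) (x : K), Φ (η a x) = η' a (Φ x) := by
  have hv :
      (Submodule.span ℂ (Set.range fun p : ℕ × H => (W ^ p.1) (e p.2))).topologicalClosure =
        ⊤ := by
    convert hmin; ext; simp [eq_comm]
  have hv' :
      (Submodule.span ℂ (Set.range fun p : ℕ × H => (W' ^ p.1) (e' p.2))).topologicalClosure =
        ⊤ := by
    convert hmin'; ext; simp [eq_comm]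
  obtain ⟨Φ, hΦ⟩ := exists_linearIsometryEquiv_apply_eq_of_inner_eq
    (fun p q => inner_pow_apply_pow_apply_eq_of_dilation hWiso hdil hWiso' hdil' p.1 q.1 p.2 q.2)
    hv hv'
  replace hΦ (n : ℕ) (h : H) : Φ ((W ^ n) (e h)) = (W' ^ n) (e' h) := hΦ (n, h)
  have hdense := Submodule.dense_iff_topologicalClosure_eq_top.2 hv
  have hΦW : (Φ : K →L[ℂ] K') ∘L W = W' ∘L Φ := by
    refine ext_on hdense ?_
    rintro _ ⟨⟨n, h⟩, rfl⟩
    show Φ (W ((W ^ n) (e h))) = W' (Φ ((W ^ n) (e h)))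
    rw [← comp_apply W, ← mul_def, ← pow_succ', hΦ, hΦ, pow_succ', mul_def, comp_apply]
  have hΦη (a : A) : (Φ : K →L[ℂ] K') ∘L η a = η' a ∘L Φ := by
    refine ext_on hdense ?_
    rintro _ ⟨⟨n, h⟩, rfl⟩
    show Φ (η a ((W ^ n) (e h))) = η' a (Φ ((W ^ n) (e h)))
    rw [apply_pow_apply_eq_pow_apply_apply hrest hWcov, hΦ, hΦ,
      apply_pow_apply_eq_pow_apply_apply hrest' hWcov']
  exact ⟨Φ, fun h => by simpa using hΦ 0 h, fun x => DFunLike.congr_fun hΦW x,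
    fun a x => DFunLike.congr_fun (hΦη a) x⟩
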